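/- Fix reals λ, r, b, ν > 0, d ≥ 0 with b > d, δ > 0, and β̂ > 0, and let q(θ,ψ) := min{β̂ψ(1−ψ), 1} (free-riding response). Set ρ := λ/(r+b) and μ := b/ν, and assume ρ > 1, β̂ > ρ²μ, and √(μβ̂) − μ < 1. Let θ̂ := 0, ψ̂ := 1 − √(μ/β̂), and η̂ := (b−d)/ϱ(θ̂,ψ̂). If η̂ > δ, then the point P := (θ̂, ψ̂, η̂) is a Lyapunov-stable equilibrium of g. -/

import Mathlib

/-- `ϱ(θ,ψ) = b + d + λθφ + νφ + rθ` with `φ = 1 − θ − ψ` (case `d_e = 0`). -/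
noncomputable def varrho (lam r b ν d θ ψ : ℝ) : ℝ :=
  b + d + lam * θ * (1 - θ - ψ) + ν * (1 - θ - ψ) + r * θ

/-- The vector field `g = (g^θ, g^ψ, g^η)` of the limit ODE for the epidemic model with
vaccination-response function `q`, on coordinates `(θ, ψ, η)`. -/
noncomputable def epiVF (lam r b ν d : ℝ) (q : ℝ → ℝ → ℝ) (x : ℝ × ℝ × ℝ) : ℝ × ℝ × ℝ :=
  (x.1 / (x.2.2 * varrho lam r b ν d x.1 x.2.1) * ((1 - x.1 - x.2.1) * lam - r - b),
   1 / (x.2.2 * varrho lam r b ν d x.1 x.2.1) *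
     (q x.1 x.2.1 * (1 - x.1 - x.2.1) * ν - b * x.2.1),
   (b - d) / varrho lam r b ν d x.1 x.2.1 - x.2.2)

/-- The domain `D = {(θ,ψ,η) : θ ≥ 0, ψ ≥ 0, θ+ψ ≤ 1, η > δ}`. -/
def domD (δ : ℝ) : Set (ℝ × ℝ × ℝ) :=
  {x | 0 ≤ x.1 ∧ 0 ≤ x.2.1 ∧ x.1 + x.2.1 ≤ 1 ∧ δ < x.2.2}

/-- `P ∈ D` is a Lyapunov-stable equilibrium of `g`: `g(P) = 0` and there are `r₀ > 0` and a
continuously differentiable `V` with `V(P) = 0`, `V(x) > 0` and `⟨∇V(x), g(x)⟩ < 0` for all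
`x ∈ D ∩ B(P,r₀)`, `x ≠ P`. -/
def IsLyapunovStableEquilibrium (g : ℝ × ℝ × ℝ → ℝ × ℝ × ℝ) (D : Set (ℝ × ℝ × ℝ))
    (P : ℝ × ℝ × ℝ) : Prop :=
  P ∈ D ∧ g P = 0 ∧
    ∃ r₀ > (0 : ℝ), ∃ V : ℝ × ℝ × ℝ → ℝ, ContDiff ℝ 1 V ∧ V P = 0 ∧
      ∀ x ∈ D ∩ Metric.ball P r₀, x ≠ P → 0 < V x ∧ fderiv ℝ V x (g x) < 0

/-!
Put `φ̂ = √(μ/β̂) = 1 - ψ̂`. Then `b = νβ̂φ̂²`, `λφ̂ < r + b` (from `β̂ > ρ²μ`), and the response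
`β̂ψ(1 - ψ)` stays below its cap near `ψ̂` (from `√(μβ̂) - μ < 1`). Near `P` the field is, to
first order, lower triangular with negative diagonal:
`g^θ ≈ θ (λφ̂ - r - b)/(ηϱ)`, `g^ψ ≈ -2νβ̂ψ̂φ̂ (ψ - ψ̂)/(ηϱ) + O(θ)`,
`g^η = -(η - η̂) + O(θ + |ψ - ψ̂|)`.
Hence `V = K₁θ² + K₂(ψ - ψ̂)² + (η - η̂)²` is a Lyapunov function once `K₂` absorbs the coupling
of `η` to `ψ` and then `K₁` absorbs the couplings of `ψ` and `η` to `θ`.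
-/

open Real

theorem fderiv_weightedSq_apply (K₁ K₂ : ℝ) (P x h : ℝ × ℝ × ℝ) :
    fderiv ℝ (fun y : ℝ × ℝ × ℝ =>
        K₁ * (y.1 - P.1) ^ 2 + K₂ * (y.2.1 - P.2.1) ^ 2 + (y.2.2 - P.2.2) ^ 2) x h
      = 2 * (K₁ * (x.1 - P.1) * h.1 + K₂ * (x.2.1 - P.2.1) * h.2.1
        + (x.2.2 - P.2.2) * h.2.2) := by
  have h₁ := (((hasFDerivAt_fst (𝕜 := ℝ) (p := x)).sub_const P.1).pow 2).const_mul K₁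
  have h₂ := (((hasFDerivAt_snd (𝕜 := ℝ) (p := x)).fst.sub_const P.2.1).pow 2).const_mul K₂
  have h₃ := ((hasFDerivAt_snd (𝕜 := ℝ) (p := x)).snd.sub_const P.2.2).pow 2
  rw [((h₁.fun_add h₂).fun_add h₃).fderiv]
  simp; ring

theorem weightedSq_pos {K₁ K₂ : ℝ} (hK₁ : 0 < K₁) (hK₂ : 0 < K₂) {P x : ℝ × ℝ × ℝ}
    (hx : x ≠ P) : 0 < K₁ * (x.1 - P.1) ^ 2 + K₂ * (x.2.1 - P.2.1) ^ 2 + (x.2.2 - P.2.2) ^ 2 := by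
  obtain ⟨θ, ψ, η⟩ := x
  obtain ⟨θ', ψ', η'⟩ := P
  have : θ - θ' ≠ 0 ∨ ψ - ψ' ≠ 0 ∨ η - η' ≠ 0 := by
    by_contra! h
    exact hx (by simp [sub_eq_zero.1 h.1, sub_eq_zero.1 h.2.1, sub_eq_zero.1 h.2.2])
  rcases this with h | h | h <;> positivity

theorem isLyapunovStableEquilibrium_of_weightedSq {g : ℝ × ℝ × ℝ → ℝ × ℝ × ℝ}
    {D : Set (ℝ × ℝ × ℝ)} {P : ℝ × ℝ × ℝ} {K₁ K₂ r₀ : ℝ} (hP : P ∈ D) (hgP : g P = 0)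
    (hK₁ : 0 < K₁) (hK₂ : 0 < K₂) (hr₀ : 0 < r₀)
    (hdecr : ∀ x ∈ D ∩ Metric.ball P r₀, x ≠ P →
      K₁ * (x.1 - P.1) * (g x).1 + K₂ * (x.2.1 - P.2.1) * (g x).2.1
        + (x.2.2 - P.2.2) * (g x).2.2 < 0) :
    IsLyapunovStableEquilibrium g D P := by
  refine ⟨hP, hgP, r₀, hr₀, fun y => K₁ * (y.1 - P.1) ^ 2 + K₂ * (y.2.1 - P.2.1) ^ 2
    + (y.2.2 - P.2.2) ^ 2, by fun_prop, by simp, fun x hx hxP => ⟨weightedSq_pos hK₁ hK₂ hxP, ?_⟩⟩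
  rw [fderiv_weightedSq_apply]
  linarith [hdecr x hx hxP]

theorem abs_sub_lt_of_mem_ball {P x : ℝ × ℝ × ℝ} {r₀ : ℝ} (hx : x ∈ Metric.ball P r₀) :
    |x.1 - P.1| < r₀ ∧ |x.2.1 - P.2.1| < r₀ ∧ |x.2.2 - P.2.2| < r₀ := by
  simpa [Metric.mem_ball, Prod.dist_eq, Real.dist_eq] using hx

theorem exists_weights_small_gain {a A B C : ℝ} (ha : 0 < a) (hB : 0 < B) (hC : 0 ≤ C) :
    ∃ K₁ K₂ : ℝ, 0 < K₁ ∧ 0 < K₂ ∧ ∀ θ v w X Y Z : ℝ, X ≤ -(a * θ ^ 2) →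
      Y ≤ A * |θ * v| - B * v ^ 2 → Z ≤ -(w ^ 2 / 2) + C * (θ ^ 2 + v ^ 2) →
      K₁ * X + K₂ * Y + Z ≤ -((θ ^ 2 + v ^ 2 + w ^ 2) / 2) := by
  set K₂ := (2 * C + 1) / B
  set K₁ := (K₂ * A ^ 2 / (2 * B) + C + 1 / 2) / a
  have hK₂ : 0 < K₂ := by positivity
  refine ⟨K₁, K₂, by positivity, hK₂, fun θ v w X Y Z hX hY hZ => ?_⟩
  have young : K₂ * (A * |θ * v|) ≤ K₂ * A ^ 2 / (2 * B) * θ ^ 2 + K₂ * B / 2 * v ^ 2 := by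
    have : K₂ * A ^ 2 / (2 * B) * θ ^ 2 + K₂ * B / 2 * v ^ 2 - K₂ * (A * |θ * v|)
        = K₂ / (2 * B) * (A * |θ| - B * |v|) ^ 2 := by
      rw [abs_mul, ← sq_abs θ, ← sq_abs v]; field_simp; ring
    linarith [show 0 ≤ K₂ / (2 * B) * (A * |θ| - B * |v|) ^ 2 by positivity]
  have e₁ : K₁ * a = K₂ * A ^ 2 / (2 * B) + C + 1 / 2 := div_mul_cancel₀ _ ha.ne'
  have e₂ : K₂ * B = 2 * C + 1 := div_mul_cancel₀ _ hB.ne'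
  nlinarith [mul_le_mul_of_nonneg_left hX (by positivity : 0 ≤ K₁),
    mul_le_mul_of_nonneg_left hY hK₂.le]

theorem sub_mul_sub_le (η u u' : ℝ) :
    (η - u') * (u - η) ≤ -((η - u') ^ 2 / 2) + (u - u') ^ 2 / 2 := by
  nlinarith [sq_nonneg (η - u' - (u - u'))]

theorem abs_div_sub_div_le {c m ϱ ϱ' : ℝ} (hm : 0 < m) (hϱ : m ≤ ϱ) (hϱ' : m ≤ ϱ') :
    |c / ϱ - c / ϱ'| ≤ |c| * |ϱ - ϱ'| / m ^ 2 := by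
  have h₀ : 0 < ϱ := hm.trans_le hϱ
  have h₁ : 0 < ϱ' := hm.trans_le hϱ'
  rw [div_sub_div _ _ h₀.ne' h₁.ne', abs_div, abs_of_pos (mul_pos h₀ h₁),
    show c * ϱ' - ϱ * c = -(c * (ϱ - ϱ')) by ring, abs_neg, abs_mul, sq]
  gcongr

theorem mul_one_sub_le_add_abs {ψ ψ' : ℝ} (hψ : 0 ≤ ψ) (hψ₁ : ψ ≤ 1) (hψ' : 0 ≤ ψ')
    (hψ'₁ : ψ' ≤ 1) : ψ * (1 - ψ) ≤ ψ' * (1 - ψ') + |ψ - ψ'| := by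
  have h : |1 - ψ - ψ'| ≤ 1 := abs_le.2 ⟨by linarith, by linarith⟩
  calc ψ * (1 - ψ) = ψ' * (1 - ψ') + (ψ - ψ') * (1 - ψ - ψ') := by ring
    _ ≤ ψ' * (1 - ψ') + |ψ - ψ'| * |1 - ψ - ψ'| := by grw [← abs_mul, ← le_abs_self]
    _ ≤ ψ' * (1 - ψ') + |ψ - ψ'| := by grw [h, mul_one]

theorem mul_mul_one_sub_le_one {β ψ ψ' : ℝ} (hβ : 0 ≤ β) (hψ : 0 ≤ ψ) (hψ₁ : ψ ≤ 1)
    (hψ' : 0 ≤ ψ') (hψ'₁ : ψ' ≤ 1) (h : β * |ψ - ψ'| ≤ 1 - β * ψ' * (1 - ψ')) :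
    β * ψ * (1 - ψ) ≤ 1 := by
  have := mul_le_mul_of_nonneg_left (mul_one_sub_le_add_abs hψ hψ₁ hψ' hψ'₁) hβ
  linarith

theorem sub_mul_one_sub_mul_sub_sq_le {φ θ ψ : ℝ} (hv : |ψ - (1 - φ)| ≤ φ) :
    (ψ - (1 - φ)) * ((1 - ψ) * (1 - θ - ψ) - φ ^ 2)
      ≤ φ * (2 * |θ * (ψ - (1 - φ))| - (ψ - (1 - φ)) ^ 2) := by
  set v := ψ - (1 - φ)
  obtain ⟨hv₁, hv₂⟩ := abs_le.1 hv
  have h₁ : v ^ 2 * (v - 2 * φ) ≤ v ^ 2 * (-φ) :=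
    mul_le_mul_of_nonneg_left (by linarith) (sq_nonneg v)
  have h₂ : -(θ * v) * (φ - v) ≤ |θ * v| * (2 * φ) :=
    mul_le_mul (neg_le_abs _) (by linarith) (by linarith) (abs_nonneg _)
  calc v * ((1 - ψ) * (1 - θ - ψ) - φ ^ 2) = v ^ 2 * (v - 2 * φ) + -(θ * v) * (φ - v) := by
        simp only [v]; ring
    _ ≤ φ * (2 * |θ * v| - v ^ 2) := by linarith

def freeRiding (βh : ℝ) : ℝ → ℝ → ℝ := fun _ ψ => min (βh * ψ * (1 - ψ)) 1

section FreeRiding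

variable {lam r b ν d δ βh φ : ℝ}

theorem le_varrho (hlam : 0 ≤ lam) (hν : 0 ≤ ν) (hr : 0 ≤ r) (hd : 0 ≤ d) {θ ψ : ℝ}
    (hθ : 0 ≤ θ) (hθψ : θ + ψ ≤ 1) : b ≤ varrho lam r b ν d θ ψ := by
  have : 0 ≤ 1 - θ - ψ := by linarith
  unfold varrho; nlinarith [mul_nonneg (mul_nonneg hlam hθ) this]

theorem varrho_le (hlam : 0 ≤ lam) (hν : 0 ≤ ν) (hr : 0 ≤ r) {θ ψ : ℝ}
    (hθ : 0 ≤ θ) (hψ : 0 ≤ ψ) (hθψ : θ + ψ ≤ 1) :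
    varrho lam r b ν d θ ψ ≤ b + d + lam + ν + r := by
  unfold varrho
  nlinarith [mul_nonneg (mul_nonneg hlam hθ) (by linarith : 0 ≤ θ + ψ),
    mul_nonneg hlam (by linarith : 0 ≤ 1 - θ), mul_nonneg hr (by linarith : 0 ≤ 1 - θ)]

theorem abs_varrho_sub_varrho_zero_le (hlam : 0 ≤ lam) (hν : 0 ≤ ν) (hr : 0 ≤ r)
    {θ ψ ψ' : ℝ} (hθ : 0 ≤ θ) (hψ : 0 ≤ ψ) (hθψ : θ + ψ ≤ 1) :
    |varrho lam r b ν d θ ψ - varrho lam r b ν d 0 ψ'| ≤ (lam + ν + r) * (θ + |ψ - ψ'|) := by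
  have h₁ : 0 ≤ lam * θ * (1 - θ - ψ) := mul_nonneg (by positivity) (by linarith)
  have h₂ : lam * θ * (1 - θ - ψ) ≤ lam * θ := by
    nlinarith [mul_nonneg (mul_nonneg hlam hθ) (by linarith : 0 ≤ θ + ψ)]
  rw [abs_le]; unfold varrho
  constructor <;> nlinarith [mul_le_mul_of_nonneg_left (neg_abs_le (ψ - ψ')) hν,
    mul_le_mul_of_nonneg_left (le_abs_self (ψ - ψ')) hν, mul_nonneg hν hθ, mul_nonneg hr hθ,
    mul_nonneg hlam hθ, mul_nonneg (add_nonneg hlam hr) (abs_nonneg (ψ - ψ'))]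

theorem mul_varrho_mem_Icc (hlam : 0 ≤ lam) (hν : 0 ≤ ν) (hr : 0 ≤ r) (hb : 0 ≤ b) (hd : 0 ≤ d)
    (hδ : 0 ≤ δ) {x : ℝ × ℝ × ℝ} (hx : x ∈ domD δ) {η₁ : ℝ} (hη : x.2.2 ≤ η₁) :
    x.2.2 * varrho lam r b ν d x.1 x.2.1 ∈ Set.Icc (δ * b) (η₁ * (b + d + lam + ν + r)) := by
  obtain ⟨hθ, hψ, hθψ, hδη⟩ := hx
  have hϱ := le_varrho (b := b) (d := d) hlam hν hr hd hθ hθψ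
  exact ⟨mul_le_mul hδη.le hϱ hb (by linarith),
    mul_le_mul hη (varrho_le hlam hν hr hθ hψ hθψ) (by linarith) (by linarith)⟩

theorem fst_mul_epiVF_fst_le {q : ℝ → ℝ → ℝ} {x : ℝ × ℝ × ℝ} {κ p₁ : ℝ}
    (hp : 0 < x.2.2 * varrho lam r b ν d x.1 x.2.1)
    (hp₁ : x.2.2 * varrho lam r b ν d x.1 x.2.1 ≤ p₁) (hκ : 0 ≤ κ)
    (hκ' : (1 - x.1 - x.2.1) * lam - r - b ≤ -κ) :
    x.1 * (epiVF lam r b ν d q x).1 ≤ -(κ / p₁ * x.1 ^ 2) := by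
  set p := x.2.2 * varrho lam r b ν d x.1 x.2.1
  have : κ * x.1 ^ 2 / p₁ ≤ κ * x.1 ^ 2 / p := div_le_div_of_nonneg_left (by positivity) hp hp₁
  calc x.1 * (epiVF lam r b ν d q x).1 = x.1 ^ 2 / p * ((1 - x.1 - x.2.1) * lam - r - b) := by
        simp only [epiVF, p]; ring
    _ ≤ x.1 ^ 2 / p * -κ := by gcongr
    _ = -(κ * x.1 ^ 2 / p) := by ring
    _ ≤ -(κ / p₁ * x.1 ^ 2) := by rw [div_mul_eq_mul_div]; linarith

theorem sub_mul_epiVF_snd_fst_le (hν : 0 ≤ ν) (hβ : 0 ≤ βh) (hφ : 0 ≤ φ)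
    (hbφ : b = ν * βh * φ ^ 2) {x : ℝ × ℝ × ℝ} {ψ₀ p₀ p₁ : ℝ}
    (hψ₀ : 0 ≤ ψ₀) (hψ₀' : ψ₀ ≤ x.2.1) (hψ₁ : x.2.1 ≤ 1)
    (hp₀ : 0 < p₀) (hp₀' : p₀ ≤ x.2.2 * varrho lam r b ν d x.1 x.2.1)
    (hp₁ : x.2.2 * varrho lam r b ν d x.1 x.2.1 ≤ p₁)
    (hv : |x.2.1 - (1 - φ)| ≤ φ) (hsat : βh * x.2.1 * (1 - x.2.1) ≤ 1) :
    (x.2.1 - (1 - φ)) * (epiVF lam r b ν d (freeRiding βh) x).2.1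
      ≤ 2 * ν * βh * φ / p₀ * |x.1 * (x.2.1 - (1 - φ))|
        - ν * βh * φ * ψ₀ / p₁ * (x.2.1 - (1 - φ)) ^ 2 := by
  set p := x.2.2 * varrho lam r b ν d x.1 x.2.1
  set v := x.2.1 - (1 - φ)
  have hp : 0 < p := hp₀.trans_le hp₀'
  have hg : (epiVF lam r b ν d (freeRiding βh) x).2.1
      = ν * βh * (x.2.1 / p) * ((1 - x.2.1) * (1 - x.1 - x.2.1) - φ ^ 2) := by
    simp only [epiVF, freeRiding, min_eq_left hsat, hbφ, p]; ring
  have h₀ : x.2.1 / p ≤ 1 / p₀ := div_le_div₀ zero_le_one hψ₁ hp₀ hp₀'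
  have h₁ : ψ₀ / p₁ ≤ x.2.1 / p := div_le_div₀ (hψ₀.trans hψ₀') hψ₀' hp hp₁
  calc v * (epiVF lam r b ν d (freeRiding βh) x).2.1
      = ν * βh * (x.2.1 / p) * (v * ((1 - x.2.1) * (1 - x.1 - x.2.1) - φ ^ 2)) := by
        rw [hg]; ring
    _ ≤ ν * βh * (x.2.1 / p) * (φ * (2 * |x.1 * v| - v ^ 2)) :=
        mul_le_mul_of_nonneg_left (sub_mul_one_sub_mul_sub_sq_le hv)
          (by have := div_nonneg (hψ₀.trans hψ₀') hp.le; positivity)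
    _ = 2 * ν * βh * φ * |x.1 * v| * (x.2.1 / p) - ν * βh * φ * v ^ 2 * (x.2.1 / p) := by ring
    _ ≤ 2 * ν * βh * φ * |x.1 * v| * (1 / p₀) - ν * βh * φ * v ^ 2 * (ψ₀ / p₁) := by
        gcongr
    _ = 2 * ν * βh * φ / p₀ * |x.1 * v| - ν * βh * φ * ψ₀ / p₁ * v ^ 2 := by ring

theorem sub_mul_epiVF_snd_snd_le (hlam : 0 ≤ lam) (hν : 0 ≤ ν) (hr : 0 ≤ r) (hb : 0 < b)
    (hd : 0 ≤ d) {q : ℝ → ℝ → ℝ} {x : ℝ × ℝ × ℝ} {ψ' : ℝ} (hx : x ∈ domD δ) (hψ' : ψ' ≤ 1) :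
    (x.2.2 - (b - d) / varrho lam r b ν d 0 ψ') * (epiVF lam r b ν d q x).2.2
      ≤ -((x.2.2 - (b - d) / varrho lam r b ν d 0 ψ') ^ 2 / 2)
        + ((b - d) * (lam + ν + r) / b ^ 2) ^ 2 * (x.1 ^ 2 + (x.2.1 - ψ') ^ 2) := by
  obtain ⟨hθ, hψ, hθψ, -⟩ := hx
  have hϱ := le_varrho (b := b) (d := d) hlam hν hr hd hθ hθψ
  have hϱ' := le_varrho (b := b) (d := d) hlam hν hr hd le_rfl (by linarith : 0 + ψ' ≤ 1)
  set M := (b - d) * (lam + ν + r) / b ^ 2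
  have hdiff : |(b - d) / varrho lam r b ν d x.1 x.2.1 - (b - d) / varrho lam r b ν d 0 ψ'|
      ≤ |M| * (x.1 + |x.2.1 - ψ'|) := by
    refine (abs_div_sub_div_le hb hϱ hϱ').trans ?_
    rw [abs_div, abs_mul, abs_of_nonneg (by positivity : 0 ≤ lam + ν + r),
      abs_of_pos (by positivity : 0 < b ^ 2), div_mul_eq_mul_div, mul_assoc]
    gcongr
    exact abs_varrho_sub_varrho_zero_le hlam hν hr hθ hψ hθψ
  have hsq : ((b - d) / varrho lam r b ν d x.1 x.2.1 - (b - d) / varrho lam r b ν d 0 ψ') ^ 2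
      ≤ M ^ 2 * (x.1 + |x.2.1 - ψ'|) ^ 2 := by
    simpa only [sq_abs, mul_pow] using pow_le_pow_left₀ (abs_nonneg _) hdiff 2
  have hS : (x.1 + |x.2.1 - ψ'|) ^ 2 ≤ 2 * (x.1 ^ 2 + (x.2.1 - ψ') ^ 2) := by
    nlinarith [sq_abs (x.2.1 - ψ'), sq_nonneg (x.1 - |x.2.1 - ψ'|)]
  refine (sub_mul_sub_le _ _ _).trans ?_
  nlinarith [mul_le_mul_of_nonneg_left hS (sq_nonneg M)]

theorem epiVF_freeRiding_eq_zero (hbφ : b = ν * βh * φ ^ 2) (hsat : βh * (1 - φ) * φ ≤ 1) :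
    epiVF lam r b ν d (freeRiding βh) (0, 1 - φ, (b - d) / varrho lam r b ν d 0 (1 - φ)) = 0 := by
  have : min (βh * (1 - φ) * (1 - (1 - φ))) 1 = βh * (1 - φ) * φ := by
    rw [sub_sub_cancel]; exact min_eq_left hsat
  refine Prod.ext (by simp [epiVF]) (Prod.ext ?_ (sub_self _))
  simp only [epiVF, freeRiding, this]
  rw [Prod.snd_zero, Prod.fst_zero, hbφ]; ring

theorem isLyapunovStableEquilibrium_epiVF_freeRiding (hlam : 0 < lam) (hr : 0 ≤ r) (hb : 0 < b)
    (hν : 0 < ν) (hd : 0 ≤ d) (hδ : 0 < δ) (hβ : 0 < βh) (hφ : 0 < φ) (hφ₁ : φ < 1)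
    (hbφ : b = ν * βh * φ ^ 2) (hlamφ : lam * φ < r + b) (hsat : βh * (1 - φ) * φ < 1)
    (hη : δ < (b - d) / varrho lam r b ν d 0 (1 - φ)) :
    IsLyapunovStableEquilibrium (epiVF lam r b ν d (freeRiding βh)) (domD δ)
      (0, 1 - φ, (b - d) / varrho lam r b ν d 0 (1 - φ)) := by
  set η₀ := (b - d) / varrho lam r b ν d 0 (1 - φ)
  set p₁ := (η₀ + 1) * (b + d + lam + ν + r)
  set κ := (r + b - lam * φ) / 2
  have hp₁ : 0 < p₁ := by have := hδ.trans hη; positivity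
  have hκ : 0 < κ := by simp only [κ]; linarith
  obtain ⟨K₁, K₂, hK₁, hK₂, hweights⟩ := exists_weights_small_gain
    (A := 2 * ν * βh * φ / (δ * b)) (C := ((b - d) * (lam + ν + r) / b ^ 2) ^ 2)
    (div_pos hκ hp₁) (by have := sub_pos.2 hφ₁; positivity : 0 < ν * βh * φ * ((1 - φ) / 2) / p₁)
    (sq_nonneg _)
  -- Within this radius of `P`: `η ≤ η₀ + 1`, `|ψ - (1 - φ)| ≤ φ`, `ψ ≥ (1 - φ) / 2`,
  -- `(1 - θ - ψ)λ - r - b ≤ -κ`, and the response `βh ψ (1 - ψ)` stays below its cap `1`.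
  have hr₀ :
      0 < min 1 (min φ (min ((1 - φ) / 2) (min (κ / lam) ((1 - βh * (1 - φ) * φ) / βh)))) := by
    simp only [lt_min_iff]
    exact ⟨one_pos, hφ, by linarith, div_pos hκ hlam, div_pos (by linarith) hβ⟩
  refine isLyapunovStableEquilibrium_of_weightedSq ⟨le_rfl, by linarith, by linarith, hη⟩
    (epiVF_freeRiding_eq_zero hbφ hsat.le) hK₁ hK₂ hr₀ fun x ⟨hxD, hxB⟩ hxP => ?_
  obtain ⟨-, hψB, hηB⟩ := abs_sub_lt_of_mem_ball hxB
  simp only [lt_min_iff] at hψB hηB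
  obtain ⟨-, hvφ, hvψ, hvκ, hvsat⟩ := hψB
  set v := x.2.1 - (1 - φ)
  have hψ₀ : (1 - φ) / 2 ≤ x.2.1 := by linarith [neg_abs_le v]
  have hψ₁ : x.2.1 ≤ 1 := by linarith [hxD.1, hxD.2.2.1]
  have hp := mul_varrho_mem_Icc hlam.le hν.le hr hb.le hd hδ.le hxD
    (by linarith [le_abs_self (x.2.2 - η₀), hηB.1] : x.2.2 ≤ η₀ + 1)
  have hκ' : (1 - x.1 - x.2.1) * lam - r - b ≤ -κ := by
    have : lam * |v| ≤ κ := by rw [lt_div_iff₀ hlam] at hvκ; linarith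
    have : 2 * κ = r + b - lam * φ := by simp only [κ]; ring
    nlinarith [mul_le_mul_of_nonneg_left (neg_abs_le v) hlam.le, mul_nonneg hlam.le hxD.1]
  have hsat' := mul_mul_one_sub_le_one (ψ' := 1 - φ) hβ.le hxD.2.1 hψ₁ (by linarith)
    (by linarith) (by rw [lt_div_iff₀ hβ] at hvsat; linarith)
  have hX := fst_mul_epiVF_fst_le (q := freeRiding βh) ((mul_pos hδ hb).trans_le hp.1) hp.2
    hκ.le hκ'
  have hY := sub_mul_epiVF_snd_fst_le hν.le hβ.le hφ.le hbφ (by linarith) hψ₀ hψ₁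
    (mul_pos hδ hb) hp.1 hp.2 hvφ.le hsat'
  have hZ := sub_mul_epiVF_snd_snd_le (q := freeRiding βh) hlam.le hν.le hr hb hd hxD
    (by linarith : 1 - φ ≤ 1)
  have hpos := weightedSq_pos one_pos one_pos hxP
  simp only [sub_zero, one_mul] at hpos ⊢
  linarith [hweights x.1 v (x.2.2 - η₀) _ _ _ hX hY hZ]

end FreeRiding

theorem stmt_9_general (lam r b ν d δ βh ρ μ θh ψh ηh : ℝ)
    (hlam : 0 < lam) (hr : 0 < r) (hb : 0 < b) (hν : 0 < ν)
    (hd : 0 ≤ d) (hδ : 0 < δ) (hβ : 0 < βh)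
    (hρdef : ρ = lam / (r + b)) (hμdef : μ = b / ν)
    (hρ : 1 < ρ) (hβgt : ρ ^ 2 * μ < βh) (hq1 : Real.sqrt (μ * βh) - μ < 1)
    (hθ : θh = 0) (hψ : ψh = 1 - Real.sqrt (μ / βh))
    (hηdef : ηh = (b - d) / varrho lam r b ν d θh ψh) (hη : δ < ηh) :
    IsLyapunovStableEquilibrium
      (epiVF lam r b ν d (fun _ ψ => min (βh * ψ * (1 - ψ)) 1)) (domD δ) (θh, ψh, ηh) := by
  subst hθ hψ hηdef
  set φ := √(μ / βh)
  have hμ : 0 < μ := hμdef ▸ div_pos hb hν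
  have hφ : 0 < φ := Real.sqrt_pos.2 (div_pos hμ hβ)
  have hφsq : φ ^ 2 = μ / βh := Real.sq_sqrt (div_pos hμ hβ).le
  have hρφ : ρ * φ < 1 := by
    refine (pow_lt_one_iff_of_nonneg (by positivity) two_ne_zero).1 ?_
    rw [mul_pow, hφsq, ← mul_div_assoc, div_lt_one hβ]
    exact hβgt
  have hβφ : βh * φ = √(μ * βh) := by
    rw [show μ * βh = βh ^ 2 * (μ / βh) by field_simp, Real.sqrt_mul (sq_nonneg _),
      Real.sqrt_sq hβ.le]
  have hsat : βh * (1 - φ) * φ = √(μ * βh) - μ := by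
    rw [← hβφ, ← mul_div_cancel₀ μ hβ.ne', ← hφsq]; ring
  have hφ₁ : φ < 1 := by nlinarith
  have hlamφ : lam * φ < r + b := by
    rwa [hρdef, div_mul_eq_mul_div, div_lt_one (by positivity)] at hρφ
  have hbφ : b = ν * βh * φ ^ 2 := by rw [hφsq, hμdef]; field_simp
  exact isLyapunovStableEquilibrium_epiVF_freeRiding hlam hr.le hb hν hd hδ hβ hφ hφ₁ hbφ hlamφ
    (hsat ▸ hq1) hη

/-- Free-riding response `q = min{β̂ψ(1−ψ), 1}`, endemic disease `ρ > 1`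
with `β̂ > ρ²μ` and `√(μβ̂) − μ < 1`: the disease-free vaccinated point
`(0, 1 − √(μ/β̂), η̂)` is a Lyapunov-stable equilibrium of `g`. -/
theorem stmt_9 (lam r b ν d δ βh ρ μ θh ψh ηh : ℝ)
    (hlam : 0 < lam) (hr : 0 < r) (hb : 0 < b) (hν : 0 < ν)
    (hd : 0 ≤ d) (hbd : d < b) (hδ : 0 < δ) (hβ : 0 < βh)
    (hρdef : ρ = lam / (r + b)) (hμdef : μ = b / ν)
    (hρ : 1 < ρ) (hβgt : ρ ^ 2 * μ < βh) (hq1 : Real.sqrt (μ * βh) - μ < 1)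
    (hθ : θh = 0) (hψ : ψh = 1 - Real.sqrt (μ / βh))
    (hηdef : ηh = (b - d) / varrho lam r b ν d θh ψh) (hη : δ < ηh) :
    IsLyapunovStableEquilibrium
      (epiVF lam r b ν d (fun _ ψ => min (βh * ψ * (1 - ψ)) 1)) (domD δ) (θh, ψh, ηh) :=
  stmt_9_general lam r b ν d δ βh ρ μ θh ψh ηh hlam hr hb hν hd hδ hβ hρdef hμdef hρ hβgt hq1 hθ hψ
    hηdef hη
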